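/- For every formula φ of the multi-agent S5 modal language and every set of S5-modal relations 𝔯_A: if there is a base ℬ with ⊮_{ℬ,𝔯_A} φ, then there is a maximally-consistent base 𝒞 ⊇ ℬ with ⊮_{𝒞,𝔯_A} φ. -/

import Mathlib

/-- A base rule: a finite set of premiss atoms and a conclusion atom. -/
abbrev Rule := Finset ℕ × ℕ

/-- A base is a collection of base rules. -/
abbrev Base := Set Rule

/-- Derivability of an atom in a base: closure of ∅ under the rules. -/
inductive Deriv (B : Base) : ℕ → Prop where
  | step (L : Finset ℕ) (p : ℕ) (mem : (L, p) ∈ B)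
      (prem : ∀ q ∈ L, Deriv B q) : Deriv B p

/-- A base is inconsistent iff every atom is derivable in it. -/
def Inconsistent (B : Base) : Prop := ∀ p : ℕ, Deriv B p

/-- Formulae of the multi-agent modal language over agents `A`. -/
inductive Form (A : Type) where
  | atom : ℕ → Form A
  | bot  : Form A
  | imp  : Form A → Form A → Form A
  | K    : A → Form A → Form A

/-- Negation abbreviation ¬φ := φ → ⊥. -/
def Form.neg {A : Type} (φ : Form A) : Form A := Form.imp φ Form.bot

/-- Validity at a base given a family of relations on bases. -/
def Valid {A : Type} (R : A → Base → Base → Prop) : Base → Form A → Prop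
  | B, .atom p => Deriv B p
  | B, .bot => ∀ p : ℕ, Deriv B p
  | B, .imp φ ψ => ∀ C : Base, B ⊆ C → Valid R C φ → Valid R C ψ
  | B, .K a φ => ∀ C : Base, R a B C → Valid R C φ

/-- Validity of φ at ℬ from a (nonempty) set of assumptions Γ. -/
def GammaValid {A : Type} (R : A → Base → Base → Prop)
    (Γ : Set (Form A)) (B : Base) (φ : Form A) : Prop :=
  ∀ C : Base, B ⊆ C → (∀ ψ ∈ Γ, Valid R C ψ) → Valid R C φ

def Euclidean {X : Sort*} (r : X → X → Prop) : Prop :=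
  ∀ x y z, r x y → r x z → r y z

/-- S5-modal relations on bases. -/
structure S5Rel (r : Base → Base → Prop) : Prop where
  incon_succ : ∀ B, Inconsistent B →
    (∃ C, r B C ∧ Inconsistent C) ∧ ∀ D, r B D → Inconsistent D
  con_succ : ∀ B, ¬ Inconsistent B → ∀ C, r B C → ¬ Inconsistent C
  zig : ∀ B C, r B C → ∀ D, B ⊆ D → ¬ Inconsistent D → ∃ E, C ⊆ E ∧ r D E
  zag : ∀ B C, r B C → ¬ Inconsistent C → ∀ D, D ⊆ B → ∃ E, E ⊆ C ∧ r D E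
  refl : ∀ B, r B B
  trans : ∀ B C D, r B C → r C D → r B D
  eucl : ∀ B C D, r B C → r B D → r C D

/-- Maximally-consistent bases. -/
def MaxCon (B : Base) : Prop :=
  ¬ Inconsistent B ∧ ∀ δ : Rule, δ ∈ B ∨ Inconsistent (insert δ B)

/-- A formula is valid iff it is valid at every base for every family of S5-modal relations. -/
def ValidAll {A : Type} (φ : Form A) : Prop :=
  ∀ R : A → Base → Base → Prop, (∀ a, S5Rel (R a)) → ∀ B : Base, Valid R B φ

/-!
Induction on `φ`. Atoms and `⊥` reduce to a Lindenbaum lemma: by Zorn, a base not deriving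
`p` extends to a maximal such base, and that base is maximally consistent because maximality
forces it to contain every rule `{p} ⇒ q`. Implications go through by monotonicity of validity.
For `K a φ`, the induction hypothesis turns an `𝔯_a`-successor of `ℬ` refuting `φ` into a
maximally-consistent `ℰ` refuting `φ`; symmetry and clause (c) give a consistent `ℱ ⊇ ℬ` with
`𝔯_a ℱ ℰ`, and any maximally-consistent `𝒞 ⊇ ℱ` still sees `ℰ`: clause (c) yields a consistent
successor of `𝒞` containing `ℰ`, which must equal `ℰ` by maximality.
-/

theorem Deriv.mono {B C : Base} (hBC : B ⊆ C) {p : ℕ} (h : Deriv B p) : Deriv C p := by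
  induction h with
  | step L p mem _ ih => exact .step L p (hBC mem) ih

theorem Inconsistent.mono {B C : Base} (hBC : B ⊆ C) (h : Inconsistent B) : Inconsistent C :=
  fun p => (h p).mono hBC

theorem Deriv.exists_finite_subset {B : Base} {p : ℕ} (h : Deriv B p) :
    ∃ F ⊆ B, F.Finite ∧ Deriv F p := by
  induction h with
  | step L p mem _ ih =>
    choose! f hfB hfin hf using ih
    refine ⟨insert (L, p) (⋃ q ∈ L, f q), ?_, ?_, ?_⟩
    · exact Set.insert_subset mem (Set.iUnion₂_subset hfB)
    · exact (L.finite_toSet.biUnion hfin).insert _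
    · refine .step L p (Set.mem_insert _ _) fun q hq => (hf q hq).mono ?_
      exact (Set.subset_biUnion_of_mem (u := f) hq).trans (Set.subset_insert _ _)

theorem Deriv.exists_mem_of_sUnion {c : Set Base} (hc : IsChain (· ⊆ ·) c) (hne : c.Nonempty)
    {p : ℕ} (h : Deriv (⋃₀ c) p) : ∃ B ∈ c, Deriv B p := by
  obtain ⟨F, hFc, hF, hFp⟩ := h.exists_finite_subset
  obtain ⟨B, hB, hFB⟩ := hc.directedOn.exists_mem_subset_of_finite_of_subset_sUnion hne hF hFc
  exact ⟨B, hB, hFp.mono hFB⟩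

theorem Deriv.of_insert {C : Base} {L : Finset ℕ} {p q x : ℕ} (hp : p ∈ L) (hCp : ¬ Deriv C p)
    (h : Deriv (insert (L, q) C) x) : Deriv C x := by
  induction h with
  | step L' y mem _ ih =>
    rcases mem with heq | hmem
    · cases heq
      exact absurd (ih p hp) hCp
    · exact .step L' y hmem ih

theorem maxCon_of_maximal_not_deriv {C : Base} {p : ℕ} (hC : Maximal (fun D => ¬ Deriv D p) C) :
    MaxCon C := by
  have hrule : ∀ q : ℕ, (({p} : Finset ℕ), q) ∈ C := fun q =>
    hC.mem_of_prop_insert fun h => hC.1 (h.of_insert (Finset.mem_singleton_self p) hC.1)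
  refine ⟨fun h => hC.1 (h p), fun δ => or_iff_not_imp_left.2 fun hδ q => ?_⟩
  have hp : Deriv (insert δ C) p := by_contra fun h => hδ (hC.mem_of_prop_insert h)
  exact .step {p} q (Set.mem_insert_of_mem _ (hrule q)) (by simpa using hp)

theorem exists_maxCon_superset_not_deriv {B : Base} {p : ℕ} (hp : ¬ Deriv B p) :
    ∃ C : Base, B ⊆ C ∧ MaxCon C ∧ ¬ Deriv C p := by
  have hchain : ∀ c ⊆ {D : Base | ¬ Deriv D p}, IsChain (· ⊆ ·) c → c.Nonempty →
      ∃ ub ∈ {D : Base | ¬ Deriv D p}, ∀ D ∈ c, D ⊆ ub := by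
    refine fun c hcS hc hne => ⟨⋃₀ c, fun h => ?_, fun _ => Set.subset_sUnion_of_mem⟩
    obtain ⟨D, hD, hDp⟩ := h.exists_mem_of_sUnion hc hne
    exact hcS hD hDp
  obtain ⟨C, hBC, hC⟩ := zorn_subset_nonempty _ hchain B hp
  exact ⟨C, hBC, maxCon_of_maximal_not_deriv hC, hC.1⟩

theorem exists_maxCon_superset {B : Base} (hB : ¬ Inconsistent B) :
    ∃ C : Base, B ⊆ C ∧ MaxCon C := by
  obtain ⟨p, hp⟩ := not_forall.1 hB
  obtain ⟨C, hBC, hC, -⟩ := exists_maxCon_superset_not_deriv hp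
  exact ⟨C, hBC, hC⟩

theorem MaxCon.eq_of_subset {E E' : Base} (hE : MaxCon E) (hEE' : E ⊆ E')
    (hE' : ¬ Inconsistent E') : E = E' :=
  hEE'.antisymm fun δ hδ =>
    (hE.2 δ).resolve_right fun h => hE' (h.mono (Set.insert_subset hδ hEE'))

namespace S5Rel

variable {r : Base → Base → Prop}

theorem symm (hr : S5Rel r) {B C : Base} (h : r B C) : r C B :=
  hr.eucl B C B h (hr.refl B)

theorem rel_of_subset_of_maxCon (hr : S5Rel r) {B C E : Base} (hBE : r B E) (hE : MaxCon E)
    (hBC : B ⊆ C) (hC : ¬ Inconsistent C) : r C E := by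
  obtain ⟨E', hEE', hCE'⟩ := hr.zig B E hBE C hBC hC
  rwa [hE.eq_of_subset hEE' (hr.con_succ C hC E' hCE')]

theorem exists_maxCon_rel (hr : S5Rel r) {B D E : Base} (hBD : r B D) (hDE : D ⊆ E)
    (hE : MaxCon E) : ∃ C : Base, B ⊆ C ∧ MaxCon C ∧ r C E := by
  obtain ⟨F, hBF, hEF⟩ := hr.zig D B (hr.symm hBD) E hDE hE.1
  obtain ⟨C, hFC, hC⟩ := exists_maxCon_superset (hr.con_succ E hE.1 F hEF)
  exact ⟨C, hBF.trans hFC, hC, hr.rel_of_subset_of_maxCon (hr.symm hEF) hE hFC hC.1⟩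

end S5Rel

section Semantics

variable {A : Type} {R : A → Base → Base → Prop}

theorem valid_of_inconsistent (hR : ∀ a, S5Rel (R a)) (φ : Form A) {B : Base}
    (hB : Inconsistent B) : Valid R B φ := by
  induction φ generalizing B with
  | atom p => exact hB p
  | bot => exact hB
  | imp φ ψ _ ihψ => exact fun C hBC _ => ihψ (hB.mono hBC)
  | K a φ ih => exact fun C hBC => ih (((hR a).incon_succ B hB).2 C hBC)

theorem Valid.mono (hR : ∀ a, S5Rel (R a)) {φ : Form A} {B C : Base} (hBC : B ⊆ C)
    (h : Valid R B φ) : Valid R C φ := by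
  induction φ generalizing B C with
  | atom p => exact Deriv.mono hBC h
  | bot => exact Inconsistent.mono hBC h
  | imp φ ψ _ _ => exact fun D hCD hφ => h D (hBC.trans hCD) hφ
  | K a φ ih =>
    intro E hCE
    by_cases hE : Inconsistent E
    · exact valid_of_inconsistent hR φ hE
    · obtain ⟨E', hE'E, hBE'⟩ := (hR a).zag C E hCE hE B hBC
      exact ih hE'E (h E' hBE')

end Semantics

/-- Non-validity propagates to some maximally-consistent superset base. -/
theorem stmt4 {A : Type} (φ : Form A) (R : A → Base → Base → Prop)
    (hR : ∀ a, S5Rel (R a)) (B : Base) (h : ¬ Valid R B φ) :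
    ∃ C : Base, B ⊆ C ∧ MaxCon C ∧ ¬ Valid R C φ := by
  induction φ generalizing B with
  | atom p => exact exists_maxCon_superset_not_deriv h
  | bot =>
    obtain ⟨C, hBC, hC⟩ := exists_maxCon_superset h
    exact ⟨C, hBC, hC, hC.1⟩
  | imp φ ψ _ ihψ =>
    obtain ⟨D, hBD, hDφ, hDψ⟩ : ∃ D, B ⊆ D ∧ Valid R D φ ∧ ¬ Valid R D ψ := by
      simpa [Valid] using h
    obtain ⟨C, hDC, hC, hCψ⟩ := ihψ D hDψ
    exact ⟨C, hBD.trans hDC, hC, fun hv => hCψ (hv C subset_rfl (hDφ.mono hR hDC))⟩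
  | K a φ ih =>
    obtain ⟨D, hBD, hDφ⟩ : ∃ D, R a B D ∧ ¬ Valid R D φ := by simpa [Valid] using h
    obtain ⟨E, hDE, hE, hEφ⟩ := ih D hDφ
    obtain ⟨C, hBC, hC, hCE⟩ := (hR a).exists_maxCon_rel hBD hDE hE
    exact ⟨C, hBC, hC, fun hv => hEφ (hv E hCE)⟩
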